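/- If u solves ∂ₜu + ∂ₓ f(u) = 0 with u(t,0) = g(t) and f'(g(t)) ≠ 0, then the second spatial derivative at the boundary satisfies ∂ₓₓu(t,0) = (f'(g(t))·g''(t) - 2 f''(g(t))·g'(t)²) / f'(g(t))³. -/

import Mathlib

/-!
On the boundary, the PDE and `u(s, 0) = g(s)` give `∂ₓu(s, 0) = -g'(s) / f'(g(s))`;
differentiating this in `s` yields one expression for the mixed derivative `∂ₜ∂ₓu(t, 0)`.
Differentiating the PDE `∂ₜu = -f'(u) ∂ₓu` in `x` yields another one, involving `∂ₓₓu(t, 0)`.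
Schwarz's theorem equates the two, and solving for `∂ₓₓu(t, 0)` gives the formula.
-/

open Filter Topology Function

section Partials

variable {E : Type*} [NormedAddCommGroup E] [NormedSpace ℝ E] {G : ℝ × ℝ → E}
  {G' : ℝ × ℝ →L[ℝ] E} {s x : ℝ}

theorem HasFDerivAt.hasDerivAt_partial_fst (h : HasFDerivAt G G' (s, x)) :
    HasDerivAt (fun r => G (r, x)) (G' (1, 0)) s :=
  h.comp_hasDerivAt s ((hasDerivAt_id s).prodMk (hasDerivAt_const s x))

theorem HasFDerivAt.hasDerivAt_partial_snd (h : HasFDerivAt G G' (s, x)) :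
    HasDerivAt (fun y => G (s, y)) (G' (0, 1)) x :=
  h.comp_hasDerivAt x ((hasDerivAt_const x s).prodMk (hasDerivAt_id x))

theorem DifferentiableAt.hasDerivAt_uncurry_snd {u : ℝ → ℝ → E}
    (h : DifferentiableAt ℝ (uncurry u) (s, x)) :
    HasDerivAt (fun y => u s y) (deriv (fun y => u s y) x) x :=
  h.hasFDerivAt.hasDerivAt_partial_snd.differentiableAt.hasDerivAt

end Partials

namespace ContDiffAt

variable {u : ℝ → ℝ → ℝ} {t x : ℝ} (h : ContDiffAt ℝ 2 (uncurry u) (t, x))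
include h

theorem eventually_deriv_fst_eq :
    ∀ᶠ p in 𝓝 (t, x), deriv (fun s => u s p.2) p.1 = fderiv ℝ (uncurry u) p (1, 0) :=
  (h.eventually (by simp)).mono fun _ hp =>
    (hp.differentiableAt two_ne_zero).hasFDerivAt.hasDerivAt_partial_fst.deriv

theorem eventually_deriv_snd_eq :
    ∀ᶠ p in 𝓝 (t, x), deriv (fun y => u p.1 y) p.2 = fderiv ℝ (uncurry u) p (0, 1) :=
  (h.eventually (by simp)).mono fun _ hp =>
    (hp.differentiableAt two_ne_zero).hasFDerivAt.hasDerivAt_partial_snd.deriv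

theorem hasFDerivAt_fderiv_uncurry :
    HasFDerivAt (fderiv ℝ (uncurry u)) (fderiv ℝ (fderiv ℝ (uncurry u)) (t, x)) (t, x) :=
  ((h.fderiv_right (m := 1) le_rfl).differentiableAt one_ne_zero).hasFDerivAt

theorem hasDerivAt_deriv_snd_fst :
    HasDerivAt (fun s => deriv (fun y => u s y) x)
      (fderiv ℝ (fderiv ℝ (uncurry u)) (t, x) (1, 0) (0, 1)) t :=
  ((ContinuousLinearMap.apply ℝ ℝ ((0, 1) : ℝ × ℝ)).hasFDerivAt.comp_hasDerivAt t
    h.hasFDerivAt_fderiv_uncurry.hasDerivAt_partial_fst).congr_of_eventuallyEq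
    (((Continuous.prodMk_left x).tendsto t).eventually h.eventually_deriv_snd_eq)

theorem hasDerivAt_deriv_snd_snd :
    HasDerivAt (fun y => deriv (fun y' => u t y') y)
      (fderiv ℝ (fderiv ℝ (uncurry u)) (t, x) (0, 1) (0, 1)) x :=
  ((ContinuousLinearMap.apply ℝ ℝ ((0, 1) : ℝ × ℝ)).hasFDerivAt.comp_hasDerivAt x
    h.hasFDerivAt_fderiv_uncurry.hasDerivAt_partial_snd).congr_of_eventuallyEq
    (((Continuous.prodMk_right t).tendsto x).eventually h.eventually_deriv_snd_eq)

theorem hasDerivAt_deriv_fst_snd :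
    HasDerivAt (fun y => deriv (fun s => u s y) t)
      (fderiv ℝ (fderiv ℝ (uncurry u)) (t, x) (0, 1) (1, 0)) x :=
  ((ContinuousLinearMap.apply ℝ ℝ ((1, 0) : ℝ × ℝ)).hasFDerivAt.comp_hasDerivAt x
    h.hasFDerivAt_fderiv_uncurry.hasDerivAt_partial_snd).congr_of_eventuallyEq
    (((Continuous.prodMk_right t).tendsto x).eventually h.eventually_deriv_fst_eq)

end ContDiffAt

theorem deriv_snd_eq_neg_div_of_boundary {u : ℝ → ℝ → ℝ} {f g : ℝ → ℝ} {s b : ℝ}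
    (hpde : deriv (fun τ => u τ b) s + deriv f (u s b) * deriv (fun y => u s y) b = 0)
    (hbc : (fun τ => u τ b) =ᶠ[𝓝 s] g) (hne : deriv f (g s) ≠ 0) :
    deriv (fun y => u s y) b = -deriv g s / deriv f (g s) := by
  have hbs : u s b = g s := hbc.eq_of_nhds
  rw [hbc.deriv_eq, hbs] at hpde
  rw [eq_div_iff hne]
  linear_combination hpde

/-- Nonlinear ILW (second order): for ∂ₜu + ∂ₓf(u) = 0 with u(t,0) = g(t) and
f'(g(t)) ≠ 0, ∂ₓₓu(t,0) = (f'(g(t))g''(t) - 2f''(g(t))g'(t)²)/f'(g(t))³. -/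
theorem stmt_5 (u : ℝ → ℝ → ℝ) (f g : ℝ → ℝ)
    (hf : ContDiff ℝ 2 f) (hg : Differentiable ℝ g) (hg' : Differentiable ℝ (deriv g))
    (hne : ∀ t > 0, deriv f (g t) ≠ 0)
    (hsmooth : ∀ t > 0, ContDiffAt ℝ 2 (fun p : ℝ × ℝ => u p.1 p.2) (t, 0))
    (hpde : ∀ t > 0, ∀ x : ℝ,
      deriv (fun s => u s x) t + deriv f (u t x) * deriv (fun y => u t y) x = 0)
    (hbc : ∀ t > 0, u t 0 = g t) :
    ∀ t > 0, iteratedDeriv 2 (fun y => u t y) 0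
      = (deriv f (g t) * iteratedDeriv 2 g t
          - 2 * iteratedDeriv 2 f (g t) * (deriv g t)^2) / (deriv f (g t))^3 := by
  intro t ht
  have hu : ContDiffAt ℝ 2 (uncurry u) (t, 0) := hsmooth t ht
  have hf' : Differentiable ℝ (deriv f) := hf.differentiable_deriv_two
  have hf'g : deriv f (g t) ≠ 0 := hne t ht
  have hux : (fun s => deriv (fun y => u s y) 0) =ᶠ[𝓝 t]
      fun s => -deriv g s / deriv f (g s) := by
    filter_upwards [eventually_gt_nhds ht] with s hs
    exact deriv_snd_eq_neg_div_of_boundary (hpde s hs 0)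
      ((eventually_gt_nhds hs).mono hbc) (hne s hs)
  have hut : (fun y => deriv (fun s => u s y) t)
      = fun y => -(deriv f (u t y) * deriv (fun y' => u t y') y) :=
    funext fun y => eq_neg_of_add_eq_zero_left (hpde t ht y)
  have hmixed_t := hu.hasDerivAt_deriv_snd_fst.unique (((hg' t).hasDerivAt.neg.div
    ((hf' (g t)).hasDerivAt.comp t (hg t).hasDerivAt) hf'g).congr_of_eventuallyEq hux)
  have hmixed_x := hu.hasDerivAt_deriv_fst_snd.unique (by
    rw [hut]
    exact (((hf' (u t 0)).hasDerivAt.comp 0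
      (hu.differentiableAt two_ne_zero).hasDerivAt_uncurry_snd).mul
      hu.hasDerivAt_deriv_snd_snd).neg)
  have hschwarz := hu.isSymmSndFDerivAt (by simp [minSmoothness_of_isRCLikeNormedField])
    (1, 0) (0, 1)
  have hux₀ : deriv (fun y => u t y) 0 = -deriv g t / deriv f (g t) := hux.self_of_nhds
  simp only [iteratedDeriv_succ, iteratedDeriv_zero, hu.hasDerivAt_deriv_snd_snd.deriv]
  rw [hmixed_t, hmixed_x] at hschwarz
  simp only [comp_apply, Pi.neg_apply, hux₀, hbc t ht] at hschwarz
  field_simp at hschwarz ⊢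
  linear_combination hschwarz
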